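/- Let d_1,…,d_n be reals with d_n = 1. Then for every 1 ≤ j ≤ n the full column sum of the matrix D satisfies Σ_{i=1}^{n} d_{ij} = 1 if j = n and Σ_{i=1}^{n} d_{ij} = 0 if j < n. -/
import Mathlib


open Finset Matrix

/-- The matrix `D` with entries `d_{ij}`: `0` for `i < j`, `d_i` for `i = j`, and
`-d_j · (∏_{k=j+1}^{i-1} (1 - d_k)) · d_i` for `i > j`. -/
def Dmat (n : ℕ) (d : Fin n → ℝ) : Matrix (Fin n) (Fin n) ℝ :=
  Matrix.of fun i j =>
    if i < j then 0
    else if i = j then d i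
    else -(d j) * (∏ k ∈ Finset.Ioo j i, (1 - d k)) * d i

lemma tele (e : ℕ → ℝ) (j : ℕ) : ∀ m,
    ∑ i ∈ Finset.Ioc j m, (∏ k ∈ Finset.Ioo j i, (1 - e k)) * e i
      = 1 - ∏ k ∈ Finset.Ioc j m, (1 - e k) := by
  intro m
  induction m with
  | zero =>
    rw [Finset.Ioc_eq_empty (by omega)]
    simp
  | succ m ih =>
    rcases le_or_gt j m with h | h
    · have hIoo : Finset.Ioo j (m + 1) = Finset.Ioc j m := by ext x; simp
      rw [Finset.sum_Ioc_succ_top h, ih, Finset.prod_Ioc_succ_top h, hIoo]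
      ring
    · rw [Finset.Ioc_eq_empty (by omega)]
      simp

theorem stmt_3 (n : ℕ) (hn : 2 ≤ n) (d : Fin n → ℝ)
    (hdn : d ⟨n - 1, by omega⟩ = 1) :
    ∀ j : Fin n,
      ((j : ℕ) + 1 = n → ∑ i : Fin n, Dmat n d i j = 1) ∧
      ((j : ℕ) + 1 < n → ∑ i : Fin n, Dmat n d i j = 0) := by
  intro j
  set e : ℕ → ℝ := fun k => if h : k < n then d ⟨k, h⟩ else 0 with he
  have hev : ∀ i : Fin n, e i.val = d i := by
    intro i; simp [he, i.isLt]
  have hprod : ∀ a b : Fin n, ∏ k ∈ Finset.Ioo a b, (1 - d k)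
      = ∏ k ∈ Finset.Ioo (a : ℕ) (b : ℕ), (1 - e k) := by
    intro a b
    rw [← Fin.map_valEmbedding_Ioo, Finset.prod_map]
    exact Finset.prod_congr rfl fun k _ => by simp [Fin.valEmbedding_apply, hev k]
  set F : ℕ → ℝ := fun i =>
    if i < (j : ℕ) then 0
    else if i = (j : ℕ) then e i
    else -(e j) * (∏ k ∈ Finset.Ioo (j : ℕ) i, (1 - e k)) * e i with hF
  have hDF : ∀ i : Fin n, Dmat n d i j = F i.val := by
    intro i
    simp only [Dmat, Matrix.of_apply, hF, Fin.lt_def]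
    by_cases h1 : (i : ℕ) < (j : ℕ)
    · simp [h1]
    · by_cases h2 : i = j
      · simp [h2, hev]
      · have h2' : (i : ℕ) ≠ (j : ℕ) := fun h => h2 (Fin.ext h)
        simp only [h1, h2, h2', if_false]
        rw [hprod, hev, hev]
  have hsum : ∑ i : Fin n, Dmat n d i j = ∑ i ∈ Finset.range n, F i := by
    rw [← Fin.sum_univ_eq_sum_range]
    exact Finset.sum_congr rfl fun i _ => hDF i
  have hjlt : (j : ℕ) < n := j.isLt
  have hsplit : Finset.range n = Finset.range ((j : ℕ) + 1) ∪ Finset.Ioc (j : ℕ) (n - 1) := by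
    ext x; simp [Finset.mem_range, Finset.mem_Ioc]; omega
  have hdisj : Disjoint (Finset.range ((j : ℕ) + 1)) (Finset.Ioc (j : ℕ) (n - 1)) := by
    rw [Finset.disjoint_left]; intro x hx hx'
    simp [Finset.mem_range] at hx
    simp [Finset.mem_Ioc] at hx'
    omega
  have hsum1 : ∑ i ∈ Finset.range ((j : ℕ) + 1), F i = e j := by
    rw [Finset.sum_range_succ]
    have : ∀ i ∈ Finset.range (j : ℕ), F i = 0 := by
      intro i hi; simp [Finset.mem_range] at hi; simp [hF, hi]
    rw [Finset.sum_eq_zero this]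
    simp [hF]
  have hsum2 : ∑ i ∈ Finset.Ioc (j : ℕ) (n - 1), F i
      = -(e j) * (1 - ∏ k ∈ Finset.Ioc (j : ℕ) (n - 1), (1 - e k)) := by
    rw [← tele e (j : ℕ) (n - 1), Finset.mul_sum]
    refine Finset.sum_congr rfl fun i hi => ?_
    simp only [Finset.mem_Ioc] at hi
    have h1 : ¬ i < (j : ℕ) := by omega
    have h2 : i ≠ (j : ℕ) := by omega
    simp only [hF, h1, h2, if_false]
    ring
  have htot : ∑ i : Fin n, Dmat n d i j
      = e j + -(e j) * (1 - ∏ k ∈ Finset.Ioc (j : ℕ) (n - 1), (1 - e k)) := by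
    rw [hsum, hsplit, Finset.sum_union hdisj, hsum1, hsum2]
  constructor
  · intro hjn
    have hj : (j : ℕ) = n - 1 := by omega
    rw [htot, Finset.Ioc_eq_empty (by omega)]
    have : e j = 1 := by
      rw [he]; simp only [hjlt, dif_pos]
      rw [show (⟨(j : ℕ), hjlt⟩ : Fin n) = ⟨n - 1, by omega⟩ from Fin.ext hj]
      exact hdn
    simp [this]
  · intro hjn
    have hmem : n - 1 ∈ Finset.Ioc (j : ℕ) (n - 1) := by
      simp [Finset.mem_Ioc]; omega
    have hzero : ∏ k ∈ Finset.Ioc (j : ℕ) (n - 1), (1 - e k) = 0 := by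
      apply Finset.prod_eq_zero hmem
      have : e (n - 1) = 1 := by
        rw [he]; simp only [show n - 1 < n by omega, dif_pos]; exact hdn
      rw [this]; ring
    rw [htot, hzero]
    ring
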